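/- arXiv:1709.00207 — 2 statements merged into one kernel-verified Lean document; each statement's English description precedes it below -/
import Mathlib

section
/- Feldheim's identity: for all nonnegative integers k and l, H_k(x)·H_l(x) = k!·l!·∑_{m=0}^{min(k,l)} 2^m/(m!·(k−m)!·(l−m)!)·H_{k+l−2m}(x) for every real x. -/
open Real MeasureTheory

/-- The physicists' Hermite polynomials: `H 0 = 1`, `H (k+1) = 2·X·H k − (H k)'`. -/
noncomputable def hermiteP : ℕ → Polynomial ℝ
  | 0 => 1
  | n + 1 => 2 * (Polynomial.X * hermiteP n) - Polynomial.derivative (hermiteP n)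

/-- The k-th physicists' Hermite polynomial as a function on ℝ. -/
noncomputable def H (k : ℕ) (x : ℝ) : ℝ := (hermiteP k).eval x

/-- The normalization constants `α k = (2^k · k! · √π)^{-1/2}`. -/
noncomputable def α (k : ℕ) : ℝ :=
  ((2 : ℝ) ^ k * (Nat.factorial k : ℝ) * Real.sqrt π) ^ (-(1 / 2 : ℝ))

/-- The normalized Hermite functions `h k x = α k · H k x · e^{-x²/2}`. -/
noncomputable def h (k : ℕ) (x : ℝ) : ℝ := α k * H k x * Real.exp (-x ^ 2 / 2)

/-!
With the raising operator `T p = 2 X p - p'` one has `T H_n = H_{n+1}`, `H_n' = 2 n H_{n-1}` and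
`T (p q) = T p · q - p q'`, hence `H_{k+1} H_l = T (H_k H_l) + 2 l H_k H_{l-1}`. Induction on `k`
(for all `l` at once) then gives `H_k H_l = ∑_m 2^m m! C(k,m) C(l,m) H_{k+l-2m}`, since the two
terms combine by Pascal's rule. The index `k + l - 2m` is kept in the form `(k - m) + (l - m)`,
which shifts correctly when `k` or `l` does.
-/

open Polynomial

noncomputable def hermiteRaise : ℝ[X] →ₗ[ℝ] ℝ[X] :=
  LinearMap.mulLeft ℝ (2 * X) - derivative

lemma hermiteRaise_apply (p : ℝ[X]) : hermiteRaise p = 2 * X * p - derivative p := rfl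

lemma hermiteRaise_hermiteP (n : ℕ) : hermiteRaise (hermiteP n) = hermiteP (n + 1) := by
  rw [hermiteRaise_apply, hermiteP, mul_assoc]

lemma hermiteRaise_mul (p q : ℝ[X]) :
    hermiteRaise (p * q) = hermiteRaise p * q - p * derivative q := by
  simp only [hermiteRaise_apply, derivative_mul]
  ring

lemma derivative_hermiteP_succ (n : ℕ) :
    derivative (hermiteP (n + 1)) = (2 * (n + 1) : ℝ) • hermiteP n := by
  induction n with
  | zero => simp [hermiteP, smul_eq_C_mul]; rfl
  | succ n ih =>
    rw [← hermiteRaise_hermiteP (n + 1), hermiteRaise_apply, derivative_sub, derivative_mul, ih,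
      ← hermiteRaise_hermiteP n, hermiteRaise_apply]
    simp only [derivative_mul, derivative_ofNat, derivative_X, derivative_smul, mul_smul_comm,
      smul_sub, zero_mul, zero_add, mul_one]
    push_cast
    rw [two_mul (2 * X * hermiteP n - _)]
    module

lemma derivative_hermiteP (n : ℕ) :
    derivative (hermiteP n) = (2 * n : ℝ) • hermiteP (n - 1) := by
  cases n with
  | zero => simp [hermiteP]
  | succ n => rw [derivative_hermiteP_succ]; push_cast; rfl

lemma hermiteP_succ_mul (k l : ℕ) :
    hermiteP (k + 1) * hermiteP l =
      hermiteRaise (hermiteP k * hermiteP l) + (2 * l : ℝ) • (hermiteP k * hermiteP (l - 1)) := by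
  rw [hermiteRaise_mul, hermiteRaise_hermiteP, derivative_hermiteP, mul_smul_comm]
  abel

noncomputable def feldheimCoeff (k l m : ℕ) : ℝ :=
  2 ^ m * m.factorial * k.choose m * l.choose m

lemma feldheimCoeff_zero_right (k l : ℕ) : feldheimCoeff k l 0 = 1 := by
  simp [feldheimCoeff]

lemma feldheimCoeff_of_lt_left {k l m : ℕ} (h : k < m) : feldheimCoeff k l m = 0 := by
  simp [feldheimCoeff, Nat.choose_eq_zero_of_lt h]

lemma feldheimCoeff_of_lt_right {k l m : ℕ} (h : l < m) : feldheimCoeff k l m = 0 := by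
  simp [feldheimCoeff, Nat.choose_eq_zero_of_lt h]

-- Pascal's rule in `k`, together with `l C(l-1, m) = (m+1) C(l, m+1)`.
lemma feldheimCoeff_succ_succ (k l m : ℕ) :
    feldheimCoeff (k + 1) l (m + 1) =
      feldheimCoeff k l (m + 1) + 2 * l * feldheimCoeff k (l - 1) m := by
  cases l with
  | zero => simp [feldheimCoeff]
  | succ l =>
    have hl : ((l + 1).choose (m + 1) : ℝ) * (m + 1) = (l + 1 : ℕ) * l.choose m := by
      exact_mod_cast (Nat.add_one_mul_choose_eq l m).symm
    simp only [feldheimCoeff, Nat.choose_succ_succ' k m, Nat.factorial_succ, Nat.add_sub_cancel]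
    push_cast at hl ⊢
    linear_combination 2 ^ (m + 1) * m.factorial * k.choose m * hl

lemma feldheimCoeff_eq {k l m : ℕ} (hk : m ≤ k) (hl : m ≤ l) :
    feldheimCoeff k l m =
      k.factorial * l.factorial * (2 ^ m / (m.factorial * (k - m).factorial * (l - m).factorial)) := by
  rw [feldheimCoeff, Nat.cast_choose ℝ hk, Nat.cast_choose ℝ hl]
  field_simp

lemma hermiteP_mul_hermiteP (k l : ℕ) :
    hermiteP k * hermiteP l =
      ∑ m ∈ Finset.range (k + 1), feldheimCoeff k l m • hermiteP (k - m + (l - m)) := by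
  induction k generalizing l with
  | zero => simp [hermiteP, feldheimCoeff_zero_right]
  | succ k ih =>
    have hraise : hermiteRaise (hermiteP k * hermiteP l) =
        ∑ m ∈ Finset.range (k + 1),
          feldheimCoeff k l (m + 1) • hermiteP (k + 1 - (m + 1) + (l - (m + 1))) +
        hermiteP (k + 1 + l) := by
      rw [ih, map_sum, Finset.sum_range_succ', Finset.sum_range_succ,
        feldheimCoeff_of_lt_left (Nat.lt_succ_self k), zero_smul, add_zero]
      simp only [map_smul, hermiteRaise_hermiteP, feldheimCoeff_zero_right, one_smul]
      congr 1
      · refine Finset.sum_congr rfl fun m hm => ?_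
        rw [Finset.mem_range] at hm
        congr 2
        omega
      · congr 1
        omega
    have hlower : (2 * l : ℝ) • (hermiteP k * hermiteP (l - 1)) =
        ∑ m ∈ Finset.range (k + 1),
          (2 * l * feldheimCoeff k (l - 1) m) • hermiteP (k + 1 - (m + 1) + (l - (m + 1))) := by
      rw [ih, Finset.smul_sum]
      refine Finset.sum_congr rfl fun m _ => ?_
      rw [smul_smul, Nat.sub_sub, add_comm 1 m, Nat.add_sub_add_right]
    rw [hermiteP_succ_mul, hraise, hlower, Finset.sum_range_succ' _ (k + 1)]
    simp only [feldheimCoeff_succ_succ, add_smul, Finset.sum_add_distrib,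
      feldheimCoeff_zero_right, one_smul, Nat.sub_zero]
    abel

theorem stmt_3 (k l : ℕ) (x : ℝ) :
    H k x * H l x =
      (Nat.factorial k : ℝ) * (Nat.factorial l : ℝ) *
        ∑ m ∈ Finset.range (min k l + 1),
          (2 : ℝ) ^ m /
              ((Nat.factorial m : ℝ) * (Nat.factorial (k - m) : ℝ) *
                (Nat.factorial (l - m) : ℝ)) *
            H (k + l - 2 * m) x := by
  have hsub : Finset.range (min k l + 1) ⊆ Finset.range (k + 1) :=
    Finset.range_subset_range.mpr (by omega)
  rw [H, H, ← eval_mul, hermiteP_mul_hermiteP, eval_finsetSum, Finset.mul_sum,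
    ← Finset.sum_subset hsub fun m _ hm => ?_]
  · refine Finset.sum_congr rfl fun m hm => ?_
    have hm : m ≤ k ∧ m ≤ l := by rw [Finset.mem_range] at hm; omega
    rw [eval_smul, smul_eq_mul, feldheimCoeff_eq hm.1 hm.2, H,
      show k - m + (l - m) = k + l - 2 * m by omega]
    ring
  · have hm : l < m := by simp only [Finset.mem_range] at *; omega
    rw [eval_smul, feldheimCoeff_of_lt_right hm, zero_smul]
end

section
/- Convolution of Gaussian with Hermite function: for every nonnegative integer k and real ω, (e^{-(·)²/2} ∗ h_k)(ω) = ∫_ℝ e^{-(ω−y)²/2}·h_k(y) dy = √π·α_k·e^{-ω²/4}·ω^k, where α_k = (2^k k! √π)^{-1/2}. -/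
open Real MeasureTheory

open Filter Polynomial in
lemma aux_mono_integrable (n : ℕ) :
    Integrable (fun x : ℝ => x ^ n * Real.exp (-x ^ 2)) := by
  have h := integrable_rpow_mul_exp_neg_mul_sq (b := 1) one_pos
    (s := (n : ℝ)) (neg_one_lt_zero.trans_le (Nat.cast_nonneg n))
  simpa [Real.rpow_natCast] using h

open Filter Polynomial in
lemma aux_poly_gauss_integrable (p : Polynomial ℝ) :
    Integrable (fun x : ℝ => p.eval x * Real.exp (-x ^ 2)) := by
  induction p using Polynomial.induction_on' with
  | add p q hp hq => simp only [eval_add, add_mul]; exact hp.add hq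
  | monomial n a =>
      simpa [Polynomial.eval_monomial, mul_assoc] using (aux_mono_integrable n).const_mul a

open Filter Polynomial in
lemma aux_poly_gauss_integrable' (p : Polynomial ℝ) (t : ℝ) :
    Integrable (fun y : ℝ => p.eval y * Real.exp (-(y - t) ^ 2)) := by
  have h := (aux_poly_gauss_integrable (p.comp (X + C t))).comp_sub_right t
  simpa [Polynomial.eval_comp] using h

open Filter Polynomial in
lemma aux_mono_tendsto (n : ℕ) :
    Tendsto (fun x : ℝ => x ^ n * Real.exp (-x ^ 2)) atTop (nhds 0) := by
  have h := rpow_mul_exp_neg_mul_sq_isLittleO_exp_neg (b := 1) one_pos (n : ℝ)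
  have h2 := (Real.tendsto_exp_neg_atTop_nhds_zero).comp
    (tendsto_id.const_mul_atTop (by norm_num : (0:ℝ) < 1/2))
  simp only [Function.comp_def, ← neg_mul] at h2
  simpa [Real.rpow_natCast] using h.trans_tendsto h2

open Filter Polynomial in
lemma aux_poly_gauss_tendsto_atTop (p : Polynomial ℝ) :
    Tendsto (fun x : ℝ => p.eval x * Real.exp (-x ^ 2)) atTop (nhds 0) := by
  induction p using Polynomial.induction_on' with
  | add p q hp hq => simpa [add_mul] using hp.add hq
  | monomial n a =>
      simpa [Polynomial.eval_monomial, mul_assoc] using (aux_mono_tendsto n).const_mul a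

open Filter Polynomial in
lemma aux_poly_gauss_tendsto_atBot (p : Polynomial ℝ) :
    Tendsto (fun x : ℝ => p.eval x * Real.exp (-x ^ 2)) atBot (nhds 0) := by
  have h := (aux_poly_gauss_tendsto_atTop (p.comp (-X))).comp tendsto_neg_atBot_atTop
  simpa [Function.comp_def, Polynomial.eval_comp] using h

open Filter Polynomial in
lemma aux_poly_gauss_tendsto_atTop' (p : Polynomial ℝ) (t : ℝ) :
    Tendsto (fun y : ℝ => p.eval y * Real.exp (-(y - t) ^ 2)) atTop (nhds 0) := by
  have h := (aux_poly_gauss_tendsto_atTop (p.comp (X + C t))).comp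
    (tendsto_atTop_add_const_right atTop (-t) tendsto_id)
  simpa [Function.comp_def, Polynomial.eval_comp, sub_eq_add_neg] using h

open Filter Polynomial in
lemma aux_poly_gauss_tendsto_atBot' (p : Polynomial ℝ) (t : ℝ) :
    Tendsto (fun y : ℝ => p.eval y * Real.exp (-(y - t) ^ 2)) atBot (nhds 0) := by
  have h := (aux_poly_gauss_tendsto_atBot (p.comp (X + C t))).comp
    (tendsto_atBot_add_const_right atBot (-t) tendsto_id)
  simpa [Function.comp_def, Polynomial.eval_comp, sub_eq_add_neg] using h

open Filter in
lemma aux_integral_deriv_zero (f f' : ℝ → ℝ) (hd : ∀ x, HasDerivAt f (f' x) x)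
    (hi : Integrable f') (ht : Tendsto f atTop (nhds 0)) (hb : Tendsto f atBot (nhds 0)) :
    ∫ x, f' x = 0 := by
  have h1 : ∫ x in Set.Iic (0:ℝ), f' x = f 0 - 0 :=
    integral_Iic_of_hasDerivAt_of_tendsto' (fun x _ => hd x) hi.integrableOn hb
  have h2 : ∫ x in Set.Ioi (0:ℝ), f' x = 0 - f 0 :=
    integral_Ioi_of_hasDerivAt_of_tendsto' (fun x _ => hd x) hi.integrableOn ht
  have h3 := intervalIntegral.integral_Iic_add_Ioi (b := (0:ℝ)) (f := f') (μ := volume)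
    hi.integrableOn hi.integrableOn
  rw [← h3, h1, h2]; ring

open Filter Polynomial in
lemma aux_key (k : ℕ) (t : ℝ) :
    ∫ y : ℝ, H k y * Real.exp (-(y - t) ^ 2) = Real.sqrt π * (2 * t) ^ k := by
  induction k generalizing t with
  | zero =>
      simp only [H, hermiteP, Polynomial.eval_one, one_mul, pow_zero, mul_one]
      rw [integral_sub_right_eq_self (fun y => Real.exp (-y ^ 2)) t]
      have hg := integral_gaussian 1
      simpa using hg
  | succ k ih =>
      set p := hermiteP k with hp
      set q : Polynomial ℝ := Polynomial.derivative p - 2 * (X - C t) * p with hqdef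
      have hderiv : ∀ y : ℝ, HasDerivAt (fun y : ℝ => p.eval y * Real.exp (-(y - t) ^ 2))
          (q.eval y * Real.exp (-(y - t) ^ 2)) y := by
        intro y
        have hinner : HasDerivAt (fun y : ℝ => -(y - t) ^ 2)
            (-(2 * (y - t) ^ 1 * 1)) y := (((hasDerivAt_id y).sub_const t).pow 2).neg
        have hexp := hinner.exp
        have : HasDerivAt (fun y : ℝ => p.eval y * Real.exp (-(y - t) ^ 2)) _ y :=
          (p.hasDerivAt y).mul hexp
        convert this using 1
        simp [hqdef]
        ring
      have hzero : ∫ y : ℝ, q.eval y * Real.exp (-(y - t) ^ 2) = 0 :=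
        aux_integral_deriv_zero _ _ hderiv (aux_poly_gauss_integrable' q t)
          (aux_poly_gauss_tendsto_atTop' p t) (aux_poly_gauss_tendsto_atBot' p t)
      have hpoint : ∀ y : ℝ, H (k + 1) y * Real.exp (-(y - t) ^ 2) =
          (2 * t) * (H k y * Real.exp (-(y - t) ^ 2)) - q.eval y * Real.exp (-(y - t) ^ 2) := by
        intro y
        simp only [H, hermiteP, hqdef, ← hp, Polynomial.eval_sub, Polynomial.eval_mul,
          Polynomial.eval_ofNat, Polynomial.eval_X, Polynomial.eval_C]
        ring
      calc ∫ y : ℝ, H (k + 1) y * Real.exp (-(y - t) ^ 2)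
          = ∫ y : ℝ, ((2 * t) * (H k y * Real.exp (-(y - t) ^ 2))
              - q.eval y * Real.exp (-(y - t) ^ 2)) := by
            exact integral_congr_ae (Eventually.of_forall hpoint)
        _ = (2 * t) * ∫ y : ℝ, p.eval y * Real.exp (-(y - t) ^ 2) := by
            simp only [H, ← hp]
            rw [integral_sub (((aux_poly_gauss_integrable' p t).const_mul (2 * t)))
              (aux_poly_gauss_integrable' q t), hzero, integral_const_mul, sub_zero]
        _ = Real.sqrt π * (2 * t) ^ (k + 1) := by
            have ih' : ∫ y : ℝ, p.eval y * Real.exp (-(y - t) ^ 2)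
                = Real.sqrt π * (2 * t) ^ k := ih t
            rw [ih']; ring

theorem stmt_15 (k : ℕ) (ω : ℝ) :
    ∫ y : ℝ, Real.exp (-(ω - y) ^ 2 / 2) * h k y =
      Real.sqrt π * α k * Real.exp (-ω ^ 2 / 4) * ω ^ k := by
  have hpt : ∀ y : ℝ, Real.exp (-(ω - y) ^ 2 / 2) * h k y
      = (α k * Real.exp (-ω ^ 2 / 4)) * (H k y * Real.exp (-(y - ω / 2) ^ 2)) := by
    intro y
    rw [h, show Real.exp (-(ω - y) ^ 2 / 2) * (α k * H k y * Real.exp (-y ^ 2 / 2))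
      = α k * H k y * (Real.exp (-(ω - y) ^ 2 / 2) * Real.exp (-y ^ 2 / 2)) from by ring,
      ← Real.exp_add, show -(ω - y) ^ 2 / 2 + -y ^ 2 / 2
        = -ω ^ 2 / 4 + -(y - ω / 2) ^ 2 from by ring, Real.exp_add]
    ring
  simp_rw [hpt]
  rw [integral_const_mul, aux_key k (ω / 2), show 2 * (ω / 2) = ω from by ring]
  ring
end
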